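/- Every ordered budget game has a state (s,≺) that is a pure Nash equilibrium. -/

import Mathlib

noncomputable section

open Finset

/-- A (standard) budget game: finitely many players `ι`, resources `ρ` and tasks `τ`.
Each resource has a positive budget, each task a nonnegative demand on every resource,
each task belongs to a unique player (`owner`), and each player has a nonempty finite
family of strategies, each strategy being a set of her own tasks. -/
structure BudgetGame (ι ρ τ : Type*) [Fintype ι] [Fintype ρ] [Fintype τ]
    [DecidableEq ι] [DecidableEq τ] where
  budget : ρ → ℝ
  budget_pos : ∀ r, 0 < budget r
  demand : τ → ρ → ℝ
  demand_nonneg : ∀ t r, 0 ≤ demand t r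
  owner : τ → ι
  strat : ι → Finset (Finset τ)
  strat_nonempty : ∀ i, (strat i).Nonempty
  strat_owned : ∀ i, ∀ A ∈ strat i, ∀ t ∈ A, owner t = i

namespace BudgetGame

variable {ι ρ τ : Type*} [Fintype ι] [Fintype ρ] [Fintype τ]
  [DecidableEq ι] [DecidableEq τ]

/-- `s` is a strategy profile: player `i` plays a strategy from her strategy set. -/
def Valid (G : BudgetGame ι ρ τ) (s : ι → Finset τ) : Prop :=
  ∀ i, s i ∈ G.strat i

/-- Total demand `D_r(s)` of the chosen tasks on resource `r`. -/
def totalDemand (G : BudgetGame ι ρ τ) (s : ι → Finset τ) (r : ρ) : ℝ :=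
  ∑ i, ∑ t ∈ s i, G.demand t r

/-- Standard (proportional) utility `u_{t,r}(s) = min(t(r), b_r·t(r)/D_r(s))`
of a chosen task `t` from resource `r`. -/
def stdTaskUtil (G : BudgetGame ι ρ τ) (s : ι → Finset τ) (t : τ) (r : ρ) : ℝ :=
  min (G.demand t r) (G.budget r * G.demand t r / G.totalDemand s r)

/-- Utility of player `i` in the standard budget game. -/
def stdUtil (G : BudgetGame ι ρ τ) (s : ι → Finset τ) (i : ι) : ℝ :=
  ∑ t ∈ s i, ∑ r, G.stdTaskUtil s t r

/-- Social welfare in the standard budget game. -/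
def stdWelfare (G : BudgetGame ι ρ τ) (s : ι → Finset τ) : ℝ :=
  ∑ i, G.stdUtil s i

/-- Pure Nash equilibrium of the standard budget game. -/
def stdNE (G : BudgetGame ι ρ τ) (s : ι → Finset τ) : Prop :=
  G.Valid s ∧ ∀ i, ∀ a ∈ G.strat i,
    G.stdUtil (Function.update s i a) i ≤ G.stdUtil s i

/-- An ordering vector `≺ = (≺_r)_r` is encoded by injective rank functions:
`t' ≺_r t` iff `ord r t' < ord r t`. -/
def InjOrd (ord : ρ → τ → ℕ) : Prop :=
  ∀ r, Function.Injective (ord r)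

/-- Total demand on `r` of the chosen tasks that come strictly before `t` in `≺_r`. -/
def prefixDemand (G : BudgetGame ι ρ τ) (s : ι → Finset τ) (ord : ρ → τ → ℕ)
    (t : τ) (r : ρ) : ℝ :=
  ∑ i, ∑ t' ∈ (s i).filter (fun t' => ord r t' < ord r t), G.demand t' r

/-- Ordered utility `u_{t,r}(s,≺) = min(t(r), max(0, b_r − Σ_{t' ≺_r t chosen} t'(r)))`. -/
def ordTaskUtil (G : BudgetGame ι ρ τ) (s : ι → Finset τ) (ord : ρ → τ → ℕ)
    (t : τ) (r : ρ) : ℝ :=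
  min (G.demand t r) (max 0 (G.budget r - G.prefixDemand s ord t r))

/-- Utility of player `i` in the ordered budget game. -/
def ordUtil (G : BudgetGame ι ρ τ) (s : ι → Finset τ) (ord : ρ → τ → ℕ) (i : ι) : ℝ :=
  ∑ t ∈ s i, ∑ r, G.ordTaskUtil s ord t r

/-- Social welfare in the ordered budget game. -/
def ordWelfare (G : BudgetGame ι ρ τ) (s : ι → Finset τ) (ord : ρ → τ → ℕ) : ℝ :=
  ∑ i, G.ordUtil s ord i

/-- `ord'` arises from `ord` by appending the tasks of `newT` at the end of every
resource order: it is injective per resource, keeps the relative order of all tasks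
not in `newT`, and places every task of `newT` after all of them. -/
def IsReorder (ord ord' : ρ → τ → ℕ) (newT : Finset τ) : Prop :=
  InjOrd ord' ∧
  (∀ (r : ρ), ∀ x ∉ newT, ∀ y ∉ newT, (ord' r x < ord' r y ↔ ord r x < ord r y)) ∧
  (∀ (r : ρ), ∀ x ∉ newT, ∀ t ∈ newT, ord' r x < ord' r t)

/-- The tasks newly chosen when coalition `C` deviates from `s` to `s'`. -/
def newTasks (C : Finset ι) (s s' : ι → Finset τ) : Finset τ :=
  C.biUnion fun i => s' i \ s i

/-- Pure Nash equilibrium of the ordered budget game: no unilateral deviation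
(with the deviator's new tasks appended at the end of every resource order)
strictly increases the deviator's utility. -/
def ordNE (G : BudgetGame ι ρ τ) (s : ι → Finset τ) (ord : ρ → τ → ℕ) : Prop :=
  G.Valid s ∧ InjOrd ord ∧
  ∀ i, ∀ a ∈ G.strat i, ∀ ord' : ρ → τ → ℕ, IsReorder ord ord' (a \ s i) →
    G.ordUtil (Function.update s i a) ord' i ≤ G.ordUtil s ord i

/-- Strong equilibrium: no coalition can deviate (new tasks appended) so that
every member strictly improves. -/
def IsStrongEq (G : BudgetGame ι ρ τ) (s : ι → Finset τ) (ord : ρ → τ → ℕ) : Prop :=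
  G.Valid s ∧ InjOrd ord ∧
  ¬ ∃ (C : Finset ι) (s' : ι → Finset τ) (ord' : ρ → τ → ℕ),
      C.Nonempty ∧ G.Valid s' ∧ (∀ j ∉ C, s' j = s j) ∧
      IsReorder ord ord' (newTasks C s s') ∧
      ∀ i ∈ C, G.ordUtil s ord i < G.ordUtil s' ord' i

/-- Super strong equilibrium: no coalition can deviate (new tasks appended) so that
every member weakly improves and at least one member strictly improves. -/
def IsSuperStrongEq (G : BudgetGame ι ρ τ) (s : ι → Finset τ) (ord : ρ → τ → ℕ) : Prop :=
  G.Valid s ∧ InjOrd ord ∧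
  ¬ ∃ (C : Finset ι) (s' : ι → Finset τ) (ord' : ρ → τ → ℕ),
      C.Nonempty ∧ G.Valid s' ∧ (∀ j ∉ C, s' j = s j) ∧
      IsReorder ord ord' (newTasks C s s') ∧
      (∀ i ∈ C, G.ordUtil s ord i ≤ G.ordUtil s' ord' i) ∧
      (∃ i ∈ C, G.ordUtil s ord i < G.ordUtil s' ord' i)

end BudgetGame

/-!
For a fixed state, the ordered utilities on a resource are handed out greedily along `≺_r`,
so the welfare is `Φ(s) = ∑_r min(b_r, D_r(s))`, whatever the orders. Take `s` maximizing `Φ`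
over all strategy profiles. When player `i` deviates, her new tasks are appended at the end
of every order, so no other player's task sees more demand before it and no other player
loses utility. Hence `i`'s gain is at most the change of `Φ`, which is `≤ 0`.
-/

lemma min_max_sub_add_min {d P B : ℝ} (hd : 0 ≤ d) :
    min d (max 0 (B - P)) + min B P = min B (d + P) := by
  rcases le_total B P with h | h
  · rw [max_eq_left (by linarith), min_eq_right hd, min_eq_left h, min_eq_left (by linarith)]
    ring
  · rw [max_eq_right (by linarith), min_eq_right h]
    rcases le_total d (B - P) with h' | h'
    · rw [min_eq_left h', min_eq_right (by linarith)]
    · rw [min_eq_right h', min_eq_left (by linarith)]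
      ring

theorem sum_min_max_sub_sum_filter_lt {α : Type*} [DecidableEq α] (d : α → ℝ)
    (hd : ∀ t, 0 ≤ d t) {f : α → ℕ} (hf : Function.Injective f) {B : ℝ} (hB : 0 ≤ B)
    (S : Finset α) :
    ∑ t ∈ S, min (d t) (max 0 (B - ∑ t' ∈ S with f t' < f t, d t')) =
      min B (∑ t ∈ S, d t) := by
  induction S using Finset.induction_on_max_value f with
  | empty => simp [hB]
  | insert a S haS hmax ih =>
    have filter_of_mem : ∀ t ∈ S,
        ({t' ∈ insert a S | f t' < f t} : Finset α) = {t' ∈ S | f t' < f t} := fun t ht => by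
      rw [filter_insert, if_neg (hmax t ht).not_gt]
    have filter_self : ({t' ∈ insert a S | f t' < f a} : Finset α) = S := by
      rw [filter_insert, if_neg (lt_irrefl _), filter_true_of_mem]
      exact fun x hx => (hmax x hx).lt_of_ne fun h => haS (hf h ▸ hx)
    calc _ = min (d a) (max 0 (B - ∑ t ∈ S, d t)) +
          ∑ t ∈ S, min (d t) (max 0 (B - ∑ t' ∈ S with f t' < f t, d t')) := by
          rw [sum_insert haS, filter_self]
          congr 1
          exact sum_congr rfl fun t ht => by rw [filter_of_mem t ht]
      _ = min B (∑ t ∈ insert a S, d t) := by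
          rw [ih, sum_insert haS, min_max_sub_add_min (hd a)]

namespace BudgetGame

variable {ι ρ τ : Type*} [Fintype ι] [Fintype ρ] [Fintype τ] [DecidableEq ι] [DecidableEq τ]
  {G : BudgetGame ι ρ τ} {s : ι → Finset τ}

def cappedDemand (G : BudgetGame ι ρ τ) (s : ι → Finset τ) : ℝ :=
  ∑ r, min (G.budget r) (G.totalDemand s r)

lemma Valid.update (hs : G.Valid s) {i : ι} {a : Finset τ} (ha : a ∈ G.strat i) :
    G.Valid (Function.update s i a) := fun k => by
  rcases eq_or_ne k i with rfl | hk
  · simpa using ha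
  · simpa [Function.update_of_ne hk] using hs k

lemma Valid.owner_eq (hs : G.Valid s) {i : ι} {t : τ} (ht : t ∈ s i) : G.owner t = i :=
  G.strat_owned i (s i) (hs i) t ht

lemma Valid.sum_sum_eq_sum_biUnion (hs : G.Valid s) (g : τ → ℝ) :
    ∑ i, ∑ t ∈ s i, g t = ∑ t ∈ univ.biUnion s, g t := by
  refine (sum_biUnion fun i _ j _ hij => disjoint_left.mpr fun t hti htj => ?_).symm
  exact hij ((hs.owner_eq hti).symm.trans (hs.owner_eq htj))

lemma Valid.ordWelfare_eq (hs : G.Valid s) {ord : ρ → τ → ℕ} (hord : InjOrd ord) :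
    G.ordWelfare s ord = G.cappedDemand s := by
  have prefixDemand_eq : ∀ t r, G.prefixDemand s ord t r =
      ∑ t' ∈ univ.biUnion s with ord r t' < ord r t, G.demand t' r := fun t r => by
    simp only [prefixDemand, sum_filter]
    exact hs.sum_sum_eq_sum_biUnion _
  rw [ordWelfare, cappedDemand]
  simp only [ordUtil, ordTaskUtil, hs.sum_sum_eq_sum_biUnion, totalDemand]
  rw [sum_comm]
  refine sum_congr rfl fun r _ => ?_
  simp only [prefixDemand_eq]
  exact sum_min_max_sub_sum_filter_lt _ (G.demand_nonneg · r) (hord r) (G.budget_pos r).le _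

lemma prefixDemand_update_le {ord ord' : ρ → τ → ℕ} {i : ι} {a : Finset τ}
    (hre : IsReorder ord ord' (a \ s i)) {t : τ} (ht : t ∉ a \ s i) (r : ρ) :
    G.prefixDemand (Function.update s i a) ord' t r ≤ G.prefixDemand s ord t r := by
  obtain ⟨-, hkeep, happend⟩ := hre
  refine sum_le_sum fun k _ => sum_le_sum_of_subset_of_nonneg ?_ fun t' _ _ =>
    G.demand_nonneg t' r
  intro t' ht'
  rw [mem_filter] at ht' ⊢
  obtain ⟨ht'k, ht't⟩ := ht'
  have ht'_old : t' ∉ a \ s i := fun hnew => (happend r t ht t' hnew).not_gt ht't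
  refine ⟨?_, (hkeep r t' ht'_old t ht).mp ht't⟩
  rcases eq_or_ne k i with rfl | hk
  · rw [Function.update_self] at ht'k
    by_contra h
    exact ht'_old (mem_sdiff.mpr ⟨ht'k, h⟩)
  · rwa [Function.update_of_ne hk] at ht'k

lemma ordUtil_le_ordUtil_update (hs : G.Valid s) {ord ord' : ρ → τ → ℕ} {i j : ι}
    {a : Finset τ} (ha : a ∈ G.strat i) (hre : IsReorder ord ord' (a \ s i)) (hj : j ≠ i) :
    G.ordUtil s ord j ≤ G.ordUtil (Function.update s i a) ord' j := by
  rw [ordUtil, ordUtil, Function.update_of_ne hj]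
  refine sum_le_sum fun t ht => sum_le_sum fun r _ => ?_
  have ht_old : t ∉ a \ s i := fun hnew =>
    hj ((hs.owner_eq ht).symm.trans (G.strat_owned i a ha t (mem_sdiff.mp hnew).1))
  exact min_le_min le_rfl (max_le_max le_rfl (sub_le_sub_left
    (prefixDemand_update_le hre ht_old r) _))

lemma ordUtil_update_sub_le (hs : G.Valid s) {ord ord' : ρ → τ → ℕ} {i : ι}
    {a : Finset τ} (ha : a ∈ G.strat i) (hre : IsReorder ord ord' (a \ s i)) :
    G.ordUtil (Function.update s i a) ord' i - G.ordUtil s ord i ≤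
      G.ordWelfare (Function.update s i a) ord' - G.ordWelfare s ord := by
  rw [ordWelfare, ordWelfare, ← add_sum_erase _ _ (mem_univ i),
    ← add_sum_erase _ _ (mem_univ i)]
  have others : ∑ j ∈ univ.erase i, G.ordUtil s ord j ≤
      ∑ j ∈ univ.erase i, G.ordUtil (Function.update s i a) ord' j :=
    sum_le_sum fun j hj => ordUtil_le_ordUtil_update hs ha hre (ne_of_mem_erase hj)
  linarith

end BudgetGame

open BudgetGame in
/-- every ordered budget game has a state `(s,≺)` that is a pure Nash
equilibrium. -/
theorem stmt_9 {ι ρ τ : Type*} [Fintype ι] [Fintype ρ] [Fintype τ]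
    [DecidableEq ι] [DecidableEq τ] (G : BudgetGame ι ρ τ) :
    ∃ (s : ι → Finset τ) (ord : ρ → τ → ℕ), G.ordNE s ord := by
  obtain ⟨s, hs, hmax⟩ := exists_max_image (Fintype.piFinset G.strat) G.cappedDemand
    (Fintype.piFinset_nonempty.mpr G.strat_nonempty)
  replace hs : G.Valid s := Fintype.mem_piFinset.mp hs
  let ord : ρ → τ → ℕ := fun _ t => Fintype.equivFin τ t
  have hord : InjOrd ord := fun _ => Fin.val_injective.comp (Fintype.equivFin τ).injective
  refine ⟨s, ord, hs, hord, fun i a ha ord' hre => ?_⟩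
  have hs' := hs.update ha
  have gain_le := ordUtil_update_sub_le hs ha hre
  have potential_le := hmax _ (Fintype.mem_piFinset.mpr hs')
  rw [hs.ordWelfare_eq hord, hs'.ordWelfare_eq hre.1] at gain_le
  linarith
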